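/- arXiv:0810.3783 — 3 statements merged into one kernel-verified Lean document; each statement's English description precedes it below -/
import Mathlib

section
/- Let A₁, A₂ be n×n real symmetric positive definite matrices and Z a positive diagonal matrix such that I − Z·A₁ is invertible. Then T = (I + Z·A₁)⁻¹(I − Z·A₂)(I + Z·A₂)⁻¹(I − Z·A₁) satisfies: I − T is invertible, and (I − T)⁻¹(I + Z·A₁)⁻¹[(I − Z·A₂)(I + Z·A₂)⁻¹ + I]·Z·b = (A₁ + A₂)⁻¹·b for every b ∈ ℝⁿ. -/
/-!
Write `Pᵢ = 1 + z aᵢ` and `Qᵢ = 1 - z aᵢ`. Since `P₂` and `Q₂` commute,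
`P₂ (P₁ - Q₂ P₂⁻¹ Q₁) = P₂ P₁ - Q₂ Q₁ = 2 z (a₁ + a₂)`, so
`1 - T = P₁⁻¹ P₂⁻¹ · 2 z (a₁ + a₂)` is invertible as soon as `z` and `a₁ + a₂` are. Moreover
`Q₂ P₂⁻¹ + 1 = 2 P₂⁻¹`, so the affine part `M = P₁⁻¹ (Q₂ P₂⁻¹ + 1) z` of the iteration satisfies
`M (a₁ + a₂) = 1 - T`, i.e. `(1 - T)⁻¹ M = (a₁ + a₂)⁻¹`.
-/

open Matrix

section Ring

variable {R : Type*} [Ring R] {z a a₁ a₂ : R}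

/-- Iteration operator of the Peaceman–Rachford scheme for `(a₁ + a₂) x = b` with step `z`. -/
noncomputable def peacemanRachford (z a₁ a₂ : R) : R :=
  Ring.inverse (1 + z * a₁) * (1 - z * a₂) * Ring.inverse (1 + z * a₂) * (1 - z * a₁)

theorem one_sub_mul_mul_inverse_one_add_add_one (h : IsUnit (1 + z * a)) :
    (1 - z * a) * Ring.inverse (1 + z * a) + 1 = 2 * Ring.inverse (1 + z * a) := by
  calc (1 - z * a) * Ring.inverse (1 + z * a) + 1
      = ((1 - z * a) + (1 + z * a)) * Ring.inverse (1 + z * a) := by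
        rw [add_mul, Ring.mul_inverse_cancel _ h]
    _ = 2 * Ring.inverse (1 + z * a) := by rw [sub_add_add_cancel, one_add_one_eq_two]

theorem one_sub_peacemanRachford (h₁ : IsUnit (1 + z * a₁)) (h₂ : IsUnit (1 + z * a₂)) :
    1 - peacemanRachford z a₁ a₂ =
      Ring.inverse (1 + z * a₁) * Ring.inverse (1 + z * a₂) * (2 * z * (a₁ + a₂)) := by
  have hcomm : (1 + z * a₂) * (1 - z * a₂) * Ring.inverse (1 + z * a₂) = 1 - z * a₂ := by
    rw [show (1 + z * a₂) * (1 - z * a₂) = (1 - z * a₂) * (1 + z * a₂) by noncomm_ring,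
      mul_assoc, Ring.mul_inverse_cancel _ h₂, mul_one]
  have hfactor : 2 * z * (a₁ + a₂) = (1 + z * a₂) *
      ((1 + z * a₁) - (1 - z * a₂) * Ring.inverse (1 + z * a₂) * (1 - z * a₁)) := by
    rw [mul_sub, ← mul_assoc, ← mul_assoc, hcomm]
    noncomm_ring
  rw [hfactor, ← mul_assoc _ (1 + z * a₂), mul_assoc (Ring.inverse (1 + z * a₁)),
    Ring.inverse_mul_cancel _ h₂, mul_one,
    mul_sub, Ring.inverse_mul_cancel _ h₁, peacemanRachford]
  noncomm_ring

theorem peacemanRachford_offset_mul (h₁ : IsUnit (1 + z * a₁)) (h₂ : IsUnit (1 + z * a₂)) :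
    Ring.inverse (1 + z * a₁) * ((1 - z * a₂) * Ring.inverse (1 + z * a₂) + 1) * z * (a₁ + a₂) =
      1 - peacemanRachford z a₁ a₂ := by
  rw [one_sub_mul_mul_inverse_one_add_add_one h₂, one_sub_peacemanRachford h₁ h₂]
  noncomm_ring

theorem isUnit_one_sub_peacemanRachford (h₁ : IsUnit (1 + z * a₁)) (h₂ : IsUnit (1 + z * a₂))
    (hz : IsUnit (2 * z)) (ha : IsUnit (a₁ + a₂)) :
    IsUnit (1 - peacemanRachford z a₁ a₂) := by
  rw [one_sub_peacemanRachford h₁ h₂]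
  exact (h₁.ringInverse.mul h₂.ringInverse).mul (hz.mul ha)

theorem inverse_one_sub_peacemanRachford_mul_offset (h₁ : IsUnit (1 + z * a₁))
    (h₂ : IsUnit (1 + z * a₂)) (hz : IsUnit (2 * z)) (ha : IsUnit (a₁ + a₂)) :
    Ring.inverse (1 - peacemanRachford z a₁ a₂) *
        (Ring.inverse (1 + z * a₁) * ((1 - z * a₂) * Ring.inverse (1 + z * a₂) + 1) * z) =
      Ring.inverse (a₁ + a₂) := by
  rw [Ring.inverse_mul_eq_iff_eq_mul _ _ _ (isUnit_one_sub_peacemanRachford h₁ h₂ hz ha),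
    Ring.eq_mul_inverse_iff_mul_eq _ _ _ ha, peacemanRachford_offset_mul h₁ h₂]

end Ring

section Matrix

variable {m : Type*} [Fintype m] [DecidableEq m] {z : m → ℝ}

theorem isUnit_diagonal_of_pos (hz : ∀ i, 0 < z i) : IsUnit (diagonal z) :=
  isUnit_diagonal.mpr (Pi.isUnit_iff.mpr fun i => (hz i).ne'.isUnit)

theorem isUnit_one_add_diagonal_mul_of_posDef (hz : ∀ i, 0 < z i) {A : Matrix m m ℝ}
    (hA : A.PosDef) : IsUnit (1 + diagonal z * A) := by
  have hinv : diagonal z * diagonal z⁻¹ = 1 := by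
    rw [diagonal_mul_diagonal, ← diagonal_one]
    exact congrArg diagonal (funext fun i => mul_inv_cancel₀ (hz i).ne')
  rw [← hinv, ← mul_add]
  exact (isUnit_diagonal_of_pos hz).mul
    ((PosDef.diagonal fun i => inv_pos.mpr (hz i)).add hA).isUnit

end Matrix

theorem dtm_stmt9_general {n : ℕ} (A₁ A₂ : Matrix (Fin n) (Fin n) ℝ)
    (hA₁ : A₁.PosDef) (hA₂ : A₂.PosDef) (z : Fin n → ℝ) (hz : ∀ i, 0 < z i)
    (Z : Matrix (Fin n) (Fin n) ℝ) (hZ : Z = Matrix.diagonal z) :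
    let T := (1 + Z * A₁)⁻¹ * (1 - Z * A₂) * (1 + Z * A₂)⁻¹ * (1 - Z * A₁)
    IsUnit (1 - T) ∧
    ∀ b : Fin n → ℝ,
      ((1 - T)⁻¹ * (1 + Z * A₁)⁻¹ * ((1 - Z * A₂) * (1 + Z * A₂)⁻¹ + 1) * Z) *ᵥ b =
        (A₁ + A₂)⁻¹ *ᵥ b := by
  subst hZ
  have h₁ := isUnit_one_add_diagonal_mul_of_posDef hz hA₁
  have h₂ := isUnit_one_add_diagonal_mul_of_posDef hz hA₂
  have h2z : IsUnit (2 * diagonal z) := by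
    rw [← diagonal_ofNat, diagonal_mul_diagonal]
    exact isUnit_diagonal_of_pos fun i => mul_pos two_pos (hz i)
  have hsum : IsUnit (A₁ + A₂) := (hA₁.add hA₂).isUnit
  simp only [nonsing_inv_eq_ringInverse]
  refine ⟨isUnit_one_sub_peacemanRachford h₁ h₂ h2z hsum, fun b => ?_⟩
  have key := inverse_one_sub_peacemanRachford_mul_offset h₁ h₂ h2z hsum
  simp only [peacemanRachford, mul_assoc] at key ⊢
  rw [key]

theorem dtm_stmt9 {n : ℕ} (A₁ A₂ : Matrix (Fin n) (Fin n) ℝ)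
    (hA₁ : A₁.PosDef) (hA₂ : A₂.PosDef) (z : Fin n → ℝ) (hz : ∀ i, 0 < z i)
    (Z : Matrix (Fin n) (Fin n) ℝ) (hZ : Z = Matrix.diagonal z)
    (h1 : IsUnit (1 - Z * A₁)) :
    let T := (1 + Z * A₁)⁻¹ * (1 - Z * A₂) * (1 + Z * A₂)⁻¹ * (1 - Z * A₁)
    IsUnit (1 - T) ∧
    ∀ b : Fin n → ℝ,
      ((1 - T)⁻¹ * (1 + Z * A₁)⁻¹ * ((1 - Z * A₂) * (1 + Z * A₂)⁻¹ + 1) * Z) *ᵥ b =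
        (A₁ + A₂)⁻¹ *ᵥ b :=
  dtm_stmt9_general A₁ A₂ hA₁ hA₂ z hz Z hZ
end

section
/- If C is symmetric positive semidefinite, D is symmetric positive definite, the full block matrix [[C, E],[Eᵀ, D]] is symmetric positive semidefinite, and Z is a positive diagonal matrix, then the DTM local coefficient matrix [[C + Z⁻¹, E],[Eᵀ, D]] is symmetric positive definite. -/
/-!
At `x = (u, y)` the quadratic form of `[[A + P, B], [Bᴴ, D]]` is that of the positive semidefinite
`[[A, B], [Bᴴ, D]]` plus `uᴴ P u`. This is positive when `u ≠ 0`, and when `u = 0` the whole form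
reduces to `yᴴ D y > 0`.
-/

open Matrix

namespace Matrix

variable {m n R : Type*} [Fintype m] [Fintype n]

lemma star_sumElim_dotProduct_fromBlocks_mulVec [NonUnitalNonAssocSemiring R] [Star R]
    (A : Matrix m m R) (B : Matrix m n R) (C : Matrix n m R) (D : Matrix n n R)
    (u : m → R) (y : n → R) :
    star (Sum.elim u y) ⬝ᵥ (fromBlocks A B C D *ᵥ Sum.elim u y) =
      star u ⬝ᵥ (A *ᵥ u) + star u ⬝ᵥ (B *ᵥ y) + star y ⬝ᵥ (C *ᵥ u) + star y ⬝ᵥ (D *ᵥ y) := by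
  rw [Function.star_sumElim, fromBlocks_mulVec, sumElim_dotProduct_sumElim]
  simp only [Sum.elim_comp_inl, Sum.elim_comp_inr, dotProduct_add]
  abel

variable [Ring R] [PartialOrder R] [StarRing R] [IsOrderedAddMonoid R]

theorem PosSemidef.posDef_fromBlocks_add₁₁ {A P : Matrix m m R} {B : Matrix m n R}
    {D : Matrix n n R} (hM : (fromBlocks A B Bᴴ D).PosSemidef) (hP : P.PosDef) (hD : D.PosDef) :
    (fromBlocks (A + P) B Bᴴ D).PosDef := by
  have hA : A.IsHermitian := (isHermitian_fromBlocks_iff.mp hM.1).1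
  refine .of_dotProduct_mulVec_pos (hA.add hP.1 |>.fromBlocks rfl hD.1) fun x hx => ?_
  obtain ⟨u, y, rfl⟩ : ∃ u y, x = Sum.elim u y := ⟨_, _, (Sum.elim_comp_inl_inr x).symm⟩
  have hMuy := hM.dotProduct_mulVec_nonneg (Sum.elim u y)
  rw [star_sumElim_dotProduct_fromBlocks_mulVec] at hMuy ⊢
  rw [add_mulVec, dotProduct_add]
  rcases eq_or_ne u 0 with rfl | hu
  · have hy : y ≠ 0 := by rintro rfl; simp at hx
    simpa using hD.dotProduct_mulVec_pos hy
  · convert add_pos_of_nonneg_of_pos hMuy (hP.dotProduct_mulVec_pos hu) using 1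
    abel

end Matrix

theorem dtm_stmt15_general {r m : ℕ}
    (C : Matrix (Fin r) (Fin r) ℝ) (E : Matrix (Fin r) (Fin m) ℝ)
    (D : Matrix (Fin m) (Fin m) ℝ)
    (hD : D.PosDef)
    (hM : (Matrix.fromBlocks C E Eᵀ D).PosSemidef)
    (z : Fin r → ℝ) (hz : ∀ i, 0 < z i) :
    (Matrix.fromBlocks (C + (Matrix.diagonal z)⁻¹) E Eᵀ D).PosDef := by
  rw [← conjTranspose_eq_transpose_of_trivial] at hM ⊢
  exact hM.posDef_fromBlocks_add₁₁ (PosDef.diagonal hz).inv hD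

theorem dtm_stmt15 {r m : ℕ}
    (C : Matrix (Fin r) (Fin r) ℝ) (E : Matrix (Fin r) (Fin m) ℝ)
    (D : Matrix (Fin m) (Fin m) ℝ)
    (hC : C.PosSemidef) (hD : D.PosDef)
    (hM : (Matrix.fromBlocks C E Eᵀ D).PosSemidef)
    (z : Fin r → ℝ) (hz : ∀ i, 0 < z i) :
    (Matrix.fromBlocks (C + (Matrix.diagonal z)⁻¹) E Eᵀ D).PosDef :=
  dtm_stmt15_general C E D hD hM z hz
end

section
/- Discrete-time VTM convergence for two blocks: let A₁, A₂ be r×r symmetric positive definite and Z positive diagonal, and define the iteration matrix M = (I + Z·A₁)⁻¹(I − Z·A₂)(I + Z·A₂)⁻¹(I − Z·A₁). Then the spectral radius of M is strictly less than 1. -/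
/-!
Write `D = diagonal z` and `‖x‖²_D = ∑ |xᵢ|² / zᵢ`. Expanding the squares gives
`‖x - D y‖²_D = ‖x + D y‖²_D - 4 Re ⟪x, y⟫`, so with `y = A x` the factor `1 - D A` loses exactly
`4 Re ⟪x, A x⟫ ≥ 0` against `1 + D A`. If `M v = μ v` and `u = (1 + D A₂)⁻¹ (1 - D A₁) v`, then
`(1 + D A₂) u = (1 - D A₁) v` and `(1 - D A₂) u = μ (1 + D A₁) v`; chaining the two identities gives
`|μ|² N = N - 4 Re ⟪v, A₁ v⟫ - 4 Re ⟪u, A₂ u⟫` with `N = ‖(1 + D A₁) v‖²_D ≥ 0`, and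
`Re ⟪v, A₁ v⟫ > 0` forces `|μ| < 1`.
-/

open Matrix NNReal

theorem spectralRadius_lt_of_finite {𝕜 A : Type*} [NormedField 𝕜] [Ring A] [Algebra 𝕜 A]
    {a : A} (hfin : (spectrum 𝕜 a).Finite) {r : ℝ≥0} (hr : 0 < r)
    (h : ∀ k ∈ spectrum 𝕜 a, ‖k‖₊ < r) : spectralRadius 𝕜 a < r :=
  calc spectralRadius 𝕜 a ≤ ↑(hfin.toFinset.sup fun k => ‖k‖₊) :=
        iSup₂_le fun _ hk => ENNReal.coe_le_coe.mpr <|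
          Finset.le_sup (f := fun k => ‖k‖₊) (hfin.mem_toFinset.mpr hk)
    _ < r := ENNReal.coe_lt_coe.mpr <|
        (Finset.sup_lt_iff hr).mpr fun k hk => h k (hfin.mem_toFinset.mp hk)

namespace Matrix

variable {n : Type*} [Fintype n]

theorem exists_mulVec_eq_smul_of_mem_spectrum [DecidableEq n] {K : Type*} [Field K]
    {M : Matrix n n K} {μ : K} (hμ : μ ∈ spectrum K M) : ∃ v ≠ 0, M *ᵥ v = μ • v := by
  rw [← spectrum_toLin', ← Module.End.hasEigenvalue_iff_mem_spectrum] at hμ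
  obtain ⟨v, hv⟩ := hμ.exists_hasEigenvector
  exact ⟨v, hv.2, by simpa using hv.apply_eq_smul⟩

theorem spectralRadius_lt_one_of_eigenvalues [DecidableEq n] {M : Matrix n n ℂ}
    (h : ∀ (μ : ℂ) (v : n → ℂ), v ≠ 0 → M *ᵥ v = μ • v → ‖μ‖ < 1) :
    spectralRadius ℂ M < 1 := by
  refine spectralRadius_lt_of_finite M.finite_spectrum one_pos fun μ hμ => ?_
  obtain ⟨v, hv, hMv⟩ := exists_mulVec_eq_smul_of_mem_spectrum hμ
  exact_mod_cast h μ v hv hMv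

theorem re_star_dotProduct_map_ofReal_mulVec (A : Matrix n n ℝ) (x : n → ℂ) :
    (star x ⬝ᵥ (A.map Complex.ofReal *ᵥ x)).re
      = (fun i => (x i).re) ⬝ᵥ (A *ᵥ fun i => (x i).re)
        + (fun i => (x i).im) ⬝ᵥ (A *ᵥ fun i => (x i).im) := by
  simp only [dotProduct, mulVec, map_apply, Pi.star_apply, Finset.mul_sum, Complex.re_sum,
    ← Finset.sum_add_distrib]
  refine Finset.sum_congr rfl fun i _ => Finset.sum_congr rfl fun j _ => ?_
  simp only [Complex.mul_re, Complex.mul_im, Complex.ofReal_re, Complex.ofReal_im,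
    Complex.star_def, Complex.conj_re, Complex.conj_im]
  ring

theorem PosSemidef.re_star_dotProduct_map_ofReal_mulVec_nonneg {A : Matrix n n ℝ}
    (hA : A.PosSemidef) (x : n → ℂ) :
    0 ≤ (star x ⬝ᵥ (A.map Complex.ofReal *ᵥ x)).re := by
  rw [re_star_dotProduct_map_ofReal_mulVec]
  have hre := hA.dotProduct_mulVec_nonneg fun i => (x i).re
  have him := hA.dotProduct_mulVec_nonneg fun i => (x i).im
  simp only [star_trivial] at hre him
  positivity

theorem PosDef.re_star_dotProduct_map_ofReal_mulVec_pos {A : Matrix n n ℝ}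
    (hA : A.PosDef) {x : n → ℂ} (hx : x ≠ 0) :
    0 < (star x ⬝ᵥ (A.map Complex.ofReal *ᵥ x)).re := by
  rw [re_star_dotProduct_map_ofReal_mulVec]
  have hsplit : (fun i => (x i).re) ≠ 0 ∨ (fun i => (x i).im) ≠ 0 := by
    by_contra! h
    exact hx (funext fun i => Complex.ext (congrFun h.1 i) (congrFun h.2 i))
  rcases hsplit with h | h
  · exact add_pos_of_pos_of_nonneg (by simpa using hA.dotProduct_mulVec_pos h)
      (by simpa using hA.posSemidef.dotProduct_mulVec_nonneg _)
  · exact add_pos_of_nonneg_of_pos (by simpa using hA.posSemidef.dotProduct_mulVec_nonneg _)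
      (by simpa using hA.dotProduct_mulVec_pos h)

theorem isUnit_det_one_add_diagonal_mul [DecidableEq n] {z : n → ℝ} (hz : ∀ i, 0 < z i)
    {A : Matrix n n ℝ} (hA : A.PosSemidef) : IsUnit (1 + diagonal z * A).det := by
  have hfactor : 1 + diagonal z * A = diagonal z * (diagonal z⁻¹ + A) := by
    rw [mul_add, diagonal_mul_diagonal, ← diagonal_one]
    congr 2
    exact funext fun i => (mul_inv_cancel₀ (hz i).ne').symm
  have hpos : (diagonal z⁻¹ + A).PosDef :=
    (posDef_diagonal_iff.mpr fun i => inv_pos.mpr (hz i)).add_posSemidef hA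
  rw [hfactor, det_mul, det_diagonal]
  exact (mul_pos (Finset.prod_pos fun i _ => hz i) hpos.det_pos).ne'.isUnit

theorem map_ofReal_mul (A B : Matrix n n ℝ) :
    (A * B).map Complex.ofReal = A.map Complex.ofReal * B.map Complex.ofReal :=
  Matrix.map_mul (f := Complex.ofRealHom)

theorem map_ofReal_one_add_diagonal_mul [DecidableEq n]
    (z : n → ℝ) (A : Matrix n n ℝ) :
    (1 + diagonal z * A).map Complex.ofReal
      = 1 + diagonal (fun i => (z i : ℂ)) * A.map Complex.ofReal := by
  simp [Matrix.map_add, map_ofReal_mul, diagonal_map]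

theorem map_ofReal_one_sub_diagonal_mul [DecidableEq n]
    (z : n → ℝ) (A : Matrix n n ℝ) :
    (1 - diagonal z * A).map Complex.ofReal
      = 1 - diagonal (fun i => (z i : ℂ)) * A.map Complex.ofReal := by
  simp [Matrix.map_sub, map_ofReal_mul, diagonal_map]

end Matrix

noncomputable def invWeightedNormSq {n : Type*} [Fintype n] (d : n → ℝ) (x : n → ℂ) : ℝ :=
  ∑ i, Complex.normSq (x i) / d i

section InvWeightedNormSq

variable {n : Type*} [Fintype n] {d : n → ℝ}

theorem invWeightedNormSq_nonneg (hd : 0 ≤ d) (x : n → ℂ) : 0 ≤ invWeightedNormSq d x :=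
  Finset.sum_nonneg fun i _ => div_nonneg (Complex.normSq_nonneg _) (hd i)

theorem invWeightedNormSq_smul (μ : ℂ) (x : n → ℂ) :
    invWeightedNormSq d (μ • x) = Complex.normSq μ * invWeightedNormSq d x := by
  simp only [invWeightedNormSq, Pi.smul_apply, smul_eq_mul, Complex.normSq_mul, Finset.mul_sum,
    mul_div_assoc]

theorem invWeightedNormSq_sub_diagonal_mulVec [DecidableEq n] (hd : ∀ i, d i ≠ 0)
    (x y : n → ℂ) :
    invWeightedNormSq d (x - diagonal (fun i => (d i : ℂ)) *ᵥ y)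
      = invWeightedNormSq d (x + diagonal (fun i => (d i : ℂ)) *ᵥ y)
        - 4 * (star x ⬝ᵥ y).re := by
  simp only [invWeightedNormSq, mulVec_diagonal, Pi.sub_apply, Pi.add_apply, dotProduct,
    Pi.star_apply, Complex.re_sum, Finset.mul_sum, ← Finset.sum_sub_distrib]
  refine Finset.sum_congr rfl fun i _ => ?_
  simp only [Complex.normSq_apply, Complex.sub_re, Complex.sub_im, Complex.add_re,
    Complex.add_im, Complex.mul_re, Complex.mul_im, Complex.ofReal_re, Complex.ofReal_im,
    Complex.star_def, Complex.conj_re, Complex.conj_im]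
  field_simp [hd i]
  ring

theorem invWeightedNormSq_one_sub_diagonal_mul_mulVec [DecidableEq n] (hd : ∀ i, d i ≠ 0)
    (B : Matrix n n ℂ) (x : n → ℂ) :
    invWeightedNormSq d ((1 - diagonal (fun i => (d i : ℂ)) * B) *ᵥ x)
      = invWeightedNormSq d ((1 + diagonal (fun i => (d i : ℂ)) * B) *ᵥ x)
        - 4 * (star x ⬝ᵥ (B *ᵥ x)).re := by
  rw [sub_mulVec, add_mulVec, one_mulVec, ← mulVec_mulVec,
    invWeightedNormSq_sub_diagonal_mulVec hd]

end InvWeightedNormSq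

/-- `K` stands for `(1 + D B₂)⁻¹ (1 - D B₁)`, so that no inverse has to be assumed to exist. -/
theorem Matrix.spectralRadius_lt_one_of_cayley_relations {n : Type*} [Fintype n] [DecidableEq n]
    {d : n → ℝ} (hd : ∀ i, 0 < d i) {B₁ B₂ K M : Matrix n n ℂ}
    (hB₁ : ∀ x ≠ 0, 0 < (star x ⬝ᵥ (B₁ *ᵥ x)).re) (hB₂ : ∀ x, 0 ≤ (star x ⬝ᵥ (B₂ *ᵥ x)).re)
    (hK : (1 + diagonal (fun i => (d i : ℂ)) * B₂) * K = 1 - diagonal (fun i => (d i : ℂ)) * B₁)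
    (hM : (1 + diagonal (fun i => (d i : ℂ)) * B₁) * M
      = (1 - diagonal (fun i => (d i : ℂ)) * B₂) * K) :
    spectralRadius ℂ M < 1 := by
  refine spectralRadius_lt_one_of_eigenvalues fun μ v hv hMv => ?_
  set D := diagonal fun i => (d i : ℂ)
  set N := invWeightedNormSq d ((1 + D * B₁) *ᵥ v)
  have hd_ne : ∀ i, d i ≠ 0 := fun i => (hd i).ne'
  have energy : Complex.normSq μ * N
      = N - 4 * (star v ⬝ᵥ (B₁ *ᵥ v)).re - 4 * (star (K *ᵥ v) ⬝ᵥ (B₂ *ᵥ (K *ᵥ v))).re :=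
    calc Complex.normSq μ * N = invWeightedNormSq d (μ • (1 + D * B₁) *ᵥ v) :=
          (invWeightedNormSq_smul μ _).symm
      _ = invWeightedNormSq d ((1 - D * B₂) *ᵥ (K *ᵥ v)) := by
          rw [mulVec_mulVec, ← hM, ← mulVec_mulVec, hMv, mulVec_smul]
      _ = invWeightedNormSq d ((1 + D * B₂) *ᵥ (K *ᵥ v))
            - 4 * (star (K *ᵥ v) ⬝ᵥ (B₂ *ᵥ (K *ᵥ v))).re :=
          invWeightedNormSq_one_sub_diagonal_mul_mulVec hd_ne _ _
      _ = _ := by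
          rw [mulVec_mulVec, hK, invWeightedNormSq_one_sub_diagonal_mul_mulVec hd_ne]
  have hN := invWeightedNormSq_nonneg (fun i => (hd i).le) ((1 + D * B₁) *ᵥ v)
  have hq₁ := hB₁ v hv
  have hq₂ := hB₂ (K *ᵥ v)
  have hμ : Complex.normSq μ < 1 := by nlinarith
  rwa [Complex.normSq_eq_norm_sq, sq_lt_one_iff₀ (norm_nonneg μ)] at hμ

theorem dtm_stmt18 {r : ℕ} (A₁ A₂ : Matrix (Fin r) (Fin r) ℝ)
    (hA₁ : A₁.PosDef) (hA₂ : A₂.PosDef) (z : Fin r → ℝ) (hz : ∀ i, 0 < z i) :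
    let Z : Matrix (Fin r) (Fin r) ℝ := Matrix.diagonal z
    spectralRadius ℂ
      (((1 + Z * A₁)⁻¹ * (1 - Z * A₂) * (1 + Z * A₂)⁻¹ * (1 - Z * A₁)).map
        Complex.ofReal) < 1 := by
  intro Z
  set K := (1 + Z * A₂)⁻¹ * (1 - Z * A₁)
  set M := (1 + Z * A₁)⁻¹ * (1 - Z * A₂) * (1 + Z * A₂)⁻¹ * (1 - Z * A₁)
  have hK : (1 + Z * A₂) * K = 1 - Z * A₁ :=
    mul_nonsing_inv_cancel_left _ _ (isUnit_det_one_add_diagonal_mul hz hA₂.posSemidef)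
  have hM : (1 + Z * A₁) * M = (1 - Z * A₂) * K := by
    simp only [M, K, mul_assoc]
    exact mul_nonsing_inv_cancel_left _ _ (isUnit_det_one_add_diagonal_mul hz hA₁.posSemidef)
  have hKc := congrArg (·.map Complex.ofReal) hK
  have hMc := congrArg (·.map Complex.ofReal) hM
  simp only [Z, map_ofReal_one_add_diagonal_mul, map_ofReal_one_sub_diagonal_mul,
    map_ofReal_mul] at hKc hMc
  exact spectralRadius_lt_one_of_cayley_relations hz
    (fun _ => hA₁.re_star_dotProduct_map_ofReal_mulVec_pos)
    hA₂.posSemidef.re_star_dotProduct_map_ofReal_mulVec_nonneg hKc hMc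
end
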